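/- arXiv:1907.00834 — 2 statements merged into one kernel-verified Lean document; each statement's English description precedes it below -/
import Mathlib

section
/- Fix t ∈ ℝ and set c = cos t, s = sin t. Define F_t : ℂ^{n+1} → ℂ^{2n+3} by F_t(z₁,…,z_n,w) = (z₁,…,z_n, c·w, s·z₁w, …, s·z_n w, s·w²). Then ‖F_t(z,w)‖² − 1 = (1 + s²|w|²)·(∑|z_k|² + |w|² − 1). In particular F_t maps the unit sphere S^{2n+1} into the unit sphere S^{4n+3}. -/
/-- D'Angelo's family `F_t(z,w) = (z, c·w, s·z₁w,…,s·z_n w, s·w²)` with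
`c = cos t`, `s = sin t` satisfies
`‖F_t(z,w)‖² − 1 = (1 + s²|w|²)·(∑|z_k|² + |w|² − 1)`; in particular `F_t`
maps `S^{2n+1}` into `S^{4n+3}`. -/
theorem dangelo_family_factorization (n : ℕ) (t : ℝ) (z : Fin n → ℂ) (w : ℂ) :
    ((∑ k, ‖z k‖ ^ 2) + ‖(Real.cos t : ℂ) * w‖ ^ 2
        + (∑ k, ‖(Real.sin t : ℂ) * z k * w‖ ^ 2)
        + ‖(Real.sin t : ℂ) * w ^ 2‖ ^ 2) - 1
      = (1 + Real.sin t ^ 2 * ‖w‖ ^ 2)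
          * ((∑ k, ‖z k‖ ^ 2) + ‖w‖ ^ 2 - 1) ∧
    ((∑ k, ‖z k‖ ^ 2) + ‖w‖ ^ 2 = 1 →
      (∑ k, ‖z k‖ ^ 2) + ‖(Real.cos t : ℂ) * w‖ ^ 2
        + (∑ k, ‖(Real.sin t : ℂ) * z k * w‖ ^ 2)
        + ‖(Real.sin t : ℂ) * w ^ 2‖ ^ 2 = 1) := by
  have key : ((∑ k, ‖z k‖ ^ 2) + ‖(Real.cos t : ℂ) * w‖ ^ 2
        + (∑ k, ‖(Real.sin t : ℂ) * z k * w‖ ^ 2)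
        + ‖(Real.sin t : ℂ) * w ^ 2‖ ^ 2) - 1
      = (1 + Real.sin t ^ 2 * ‖w‖ ^ 2)
          * ((∑ k, ‖z k‖ ^ 2) + ‖w‖ ^ 2 - 1) := by
    have hc : Real.sin t ^ 2 + Real.cos t ^ 2 = 1 := Real.sin_sq_add_cos_sq t
    simp only [norm_mul, norm_pow, Complex.norm_real, Real.norm_eq_abs, mul_pow, Finset.mul_sum, sq_abs]
    rw [show (∑ k, Real.sin t ^ 2 * ‖z k‖ ^ 2 * ‖w‖ ^ 2)
        = Real.sin t ^ 2 * ‖w‖ ^ 2 * ∑ k, ‖z k‖ ^ 2 by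
      rw [Finset.mul_sum]; exact Finset.sum_congr rfl fun k _ => by ring]
    nlinarith [hc]
  refine ⟨key, fun h => ?_⟩
  have := key
  rw [h] at this
  linarith
end

section
/- For the Faran–Huang-type map F(z,w) = ((√3/9)(z²+4z−2), (√6/9)(z²+z+1), (√3/12)·w(3z+5), (√6/6)·w², (√13/12)·w(z−1)) from ℂ² to ℂ⁵, one has ‖F(z,w)‖² = 1 whenever |z|² + |w|² = 1; i.e., F maps the unit sphere S³ into the unit sphere S⁹. -/
/-- The Faran–Huang-type map
`F(z,w) = ((√3/9)(z²+4z−2), (√6/9)(z²+z+1), (√3/12)w(3z+5), (√6/6)w², (√13/12)w(z−1))`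
sends the unit sphere `S³ ⊂ ℂ²` into the unit sphere `S⁹ ⊂ ℂ⁵`. -/
theorem faran_huang_map_spherical :
    ∀ z w : ℂ, ‖z‖ ^ 2 + ‖w‖ ^ 2 = 1 →
      ‖(Real.sqrt 3 / 9 : ℂ) * (z ^ 2 + 4 * z - 2)‖ ^ 2
        + ‖(Real.sqrt 6 / 9 : ℂ) * (z ^ 2 + z + 1)‖ ^ 2
        + ‖(Real.sqrt 3 / 12 : ℂ) * (w * (3 * z + 5))‖ ^ 2
        + ‖(Real.sqrt 6 / 6 : ℂ) * w ^ 2‖ ^ 2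
        + ‖(Real.sqrt 13 / 12 : ℂ) * (w * (z - 1))‖ ^ 2 = 1 := by
  intro z w h
  have h3 : Real.sqrt 3 ^ 2 = 3 := Real.sq_sqrt (by norm_num)
  have h6 : Real.sqrt 6 ^ 2 = 6 := Real.sq_sqrt (by norm_num)
  have h13 : Real.sqrt 13 ^ 2 = 13 := Real.sq_sqrt (by norm_num)
  simp only [Complex.sq_norm] at h ⊢
  simp only [pow_two] at h ⊢
  simp only [Complex.normSq_apply, Complex.mul_re, Complex.mul_im,
    Complex.add_re, Complex.add_im, Complex.sub_re, Complex.sub_im, Complex.ofReal_re,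
    Complex.ofReal_im, Complex.div_re, Complex.div_im, Complex.normSq_ofNat,
    Complex.re_ofNat, Complex.im_ofNat, Complex.one_re, Complex.one_im] at h ⊢
  ring_nf
  simp only [h3, h6, h13]
  linear_combination ((w.re*w.re + w.im*w.im)/6 + (z.re*z.re + z.im*z.im + 4*z.re + 7)/9) * h
end
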